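/- arXiv:2110.13782 — 3 statements merged into one kernel-verified Lean document; each statement's English description precedes it below -/
import Mathlib

section
/- Let J be a strongly stable monomial ideal of the polynomial ring R = k[x_1,...,x_d] and let 1 ≤ i ≤ d and j ≥ 0. Then the monomial x_i^j lies in J if and only if the ideal J + (x_{i+1},...,x_d) contains every monomial of degree j (i.e. (J + (x_{i+1},...,x_d))_j = R_j). -/
open MvPolynomial

/-- A monomial ideal: an ideal generated by a set of monomials. -/
def IsMonomialIdeal {k : Type} [Field k] {d : ℕ} (J : Ideal (MvPolynomial (Fin d) k)) : Prop :=
  ∃ S : Set (Fin d →₀ ℕ), J = Ideal.span ((fun m => monomial m (1 : k)) '' S)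

/-- A (monomial) ideal is strongly stable if whenever a monomial `μ·x_j ∈ J` and `i < j`,
also `μ·x_i ∈ J`. -/
def StronglyStable {k : Type} [Field k] {d : ℕ} (J : Ideal (MvPolynomial (Fin d) k)) : Prop :=
  ∀ (m : Fin d →₀ ℕ) (i j : Fin d), i < j →
    monomial (m + Finsupp.single j 1) (1 : k) ∈ J →
    monomial (m + Finsupp.single i 1) (1 : k) ∈ J

/-- degree of an exponent vector -/
private def dg {d : ℕ} (m : Fin d →₀ ℕ) : ℕ := m.sum (fun _ e => e)

/-- weight of an exponent vector -/
private def wt {d : ℕ} (m : Fin d →₀ ℕ) : ℕ := m.sum (fun t e => t.val * e)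

private lemma dg_add {d : ℕ} (a b : Fin d →₀ ℕ) : dg (a + b) = dg a + dg b :=
  Finsupp.sum_add_index' (fun _ => rfl) (fun _ _ _ => rfl)

private lemma wt_add {d : ℕ} (a b : Fin d →₀ ℕ) : wt (a + b) = wt a + wt b :=
  Finsupp.sum_add_index' (fun t => by simp) (fun t e1 e2 => by ring)

private lemma dg_single {d : ℕ} (t : Fin d) (e : ℕ) : dg (Finsupp.single t e) = e :=
  Finsupp.sum_single_index rfl

private lemma wt_single {d : ℕ} (t : Fin d) (e : ℕ) : wt (Finsupp.single t e) = t.val * e :=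
  Finsupp.sum_single_index (by simp)

private lemma wt_le {d : ℕ} (i : Fin d) (m : Fin d →₀ ℕ) (h : ∀ t, i < t → m t = 0) :
    wt m ≤ i.val * dg m := by
  unfold wt dg
  rw [Finsupp.sum, Finsupp.sum, Finset.mul_sum]
  apply Finset.sum_le_sum
  intro t ht
  apply Nat.mul_le_mul_right
  by_contra hlt
  exact (Finsupp.mem_support_iff.mp ht) (h t (by exact lt_of_le_of_lt (le_refl _) (by
    exact (Fin.lt_iff_val_lt_val).mpr (Nat.lt_of_not_le hlt))))

/-- the climbing lemma -/
private lemma climb {k : Type} [Field k] {d : ℕ} (J : Ideal (MvPolynomial (Fin d) k))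
    (hss : StronglyStable J) (i : Fin d) (j : ℕ)
    (hx : monomial (Finsupp.single i j) (1 : k) ∈ J) :
    ∀ n (m : Fin d →₀ ℕ), i.val * j - wt m = n → (∀ t, i < t → m t = 0) → dg m = j →
      monomial m (1 : k) ∈ J := by
  intro n
  induction n using Nat.strong_induction_on with
  | _ n ih =>
    intro m hn hsup hdeg
    by_cases hlow : ∃ t, t < i ∧ m t ≠ 0
    · obtain ⟨t, hti, hmt⟩ := hlow
      have hle : Finsupp.single t 1 ≤ m :=
        Finsupp.single_le_iff.mpr (Nat.one_le_iff_ne_zero.mpr hmt)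
      set μ := m - Finsupp.single t 1 with hμ
      have hm : μ + Finsupp.single t 1 = m := tsub_add_cancel_of_le hle
      set m' := μ + Finsupp.single i 1 with hm'
      have hsup' : ∀ s, i < s → m' s = 0 := by
        intro s hs
        have h1 : m s = 0 := hsup s hs
        have h2 : μ s = 0 := by
          rw [hμ, Finsupp.tsub_apply, h1]; simp
        simp [hm', h2, Finsupp.single_apply, (Fin.ne_of_lt hs)]
      have hdeg' : dg m' = j := by
        have h1 : dg m = dg μ + 1 := by rw [← hm, dg_add, dg_single]
        rw [hm', dg_add, dg_single]; omega
      have hwt : wt m = wt μ + t.val := by rw [← hm, wt_add, wt_single]; omega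
      have hwt' : wt m' = wt μ + i.val := by rw [hm', wt_add, wt_single]; omega
      have hwle : wt m' ≤ i.val * j := by
        have := wt_le i m' hsup'; rwa [hdeg'] at this
      have hlt : i.val * j - wt m' < n := by
        have htv : t.val < i.val := hti
        omega
      have hmem' : monomial m' (1 : k) ∈ J := ih _ hlt m' rfl hsup' hdeg'
      have := hss μ t i hti hmem'
      rwa [hm] at this
    · push_neg at hlow
      have hm : m = Finsupp.single i j := by
        have hmi : ∀ s, s ≠ i → m s = 0 := by
          intro s hs
          rcases lt_or_gt_of_ne hs with h | h
          · exact hlow s h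
          · exact hsup s h
        have : m = Finsupp.single i (m i) := by
          ext s
          rcases eq_or_ne s i with rfl | hs
          · simp
          · simp [Finsupp.single_apply, (Ne.symm hs : ¬ i = s), hmi s hs]
        rw [this] at hdeg ⊢
        rw [dg_single] at hdeg
        rw [hdeg]
      rw [hm]; exact hx

/-- for a strongly stable monomial ideal `J`, the pure power `x_i^j` lies in `J`
iff `J + (x_{i+1},…,x_d)` contains every homogeneous polynomial of degree `j`
(variables are indexed `0,…,d-1`, so `x_i` is `X i` with `i : Fin d` and
`x_{i+1},…,x_d` are the `X t` with `i < t`). -/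
theorem stmt0 {k : Type} [Field k] {d : ℕ} (J : Ideal (MvPolynomial (Fin d) k))
    (hmon : IsMonomialIdeal J) (hss : StronglyStable J) (i : Fin d) (j : ℕ) :
    monomial (Finsupp.single i j) (1 : k) ∈ J ↔
      ∀ f ∈ homogeneousSubmodule (Fin d) k j,
        f ∈ J ⊔ Ideal.span {g | ∃ t : Fin d, i < t ∧ g = X t} := by
  set Q : Ideal (MvPolynomial (Fin d) k) := Ideal.span {g | ∃ t : Fin d, i < t ∧ g = X t} with hQ
  constructor
  · intro hx f hf
    rw [mem_homogeneousSubmodule] at hf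
    rw [f.as_sum]
    apply Submodule.sum_mem
    intro m hm
    have hcoeff : coeff m f ≠ 0 := Finsupp.mem_support_iff.mp hm
    have hdeg : dg m = j := by
      have := hf hcoeff
      simpa [Finsupp.weight_apply, dg, Finsupp.sum] using this
    by_cases hhi : ∃ t, i < t ∧ m t ≠ 0
    · obtain ⟨t, hti, hmt⟩ := hhi
      apply Submodule.mem_sup_right
      have : monomial m (coeff m f) = monomial (m - Finsupp.single t 1) (coeff m f) * X t := by
        rw [X, monomial_mul, mul_one, tsub_add_cancel_of_le]
        exact Finsupp.single_le_iff.mpr (Nat.one_le_iff_ne_zero.mpr hmt)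
      rw [this]
      exact Ideal.mul_mem_left _ _ (Ideal.subset_span ⟨t, hti, rfl⟩)
    · push_neg at hhi
      apply Submodule.mem_sup_left
      have h1 : monomial m (1 : k) ∈ J :=
        climb J hss i j hx _ m rfl (fun t ht => hhi t ht) hdeg
      have : monomial m (coeff m f) = C (coeff m f) * monomial m 1 := by
        rw [C_mul_monomial, mul_one]
      rw [this]
      exact Ideal.mul_mem_left _ _ h1
  · intro h
    have hx : monomial (Finsupp.single i j) (1 : k) ∈ J ⊔ Q := by
      apply h
      rw [mem_homogeneousSubmodule]
      apply isHomogeneous_monomial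
      exact Finsupp.degree_single i j
    obtain ⟨b, hb, c, hc, hbc⟩ := Submodule.mem_sup.mp hx
    set φ : MvPolynomial (Fin d) k →ₐ[k] MvPolynomial (Fin d) k :=
      aeval (fun t => if i < t then 0 else X t) with hφ
    set ψ : MvPolynomial (Fin d) k →+* MvPolynomial (Fin d) k := φ.toRingHom with hψ
    obtain ⟨S, hS⟩ := hmon
    have hφJ : ψ b ∈ J := by
      have h1 : ψ b ∈ Ideal.map ψ J := Ideal.mem_map_of_mem _ hb
      have h2 : Ideal.map ψ J ≤ J := by
        rw [hS, Ideal.map_span]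
        apply Ideal.span_le.mpr
        rintro g ⟨g', ⟨m, hmS, rfl⟩, rfl⟩
        show φ (monomial m 1) ∈ Ideal.span ((fun m => monomial m (1 : k)) '' S)
        by_cases hm : ∃ t ∈ m.support, i < t
        · obtain ⟨t, htm, hti⟩ := hm
          have hz : φ (monomial m 1) = 0 := by
            rw [hφ, aeval_monomial, map_one, one_mul]
            apply Finset.prod_eq_zero htm
            simp only [if_pos hti]
            exact zero_pow (Finsupp.mem_support_iff.mp htm)
          rw [hz]; exact Ideal.zero_mem _
        · push_neg at hm
          have hz : φ (monomial m 1) = monomial m 1 := by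
            rw [hφ, aeval_monomial, map_one, one_mul]
            conv_rhs => rw [monomial_eq, C_1, one_mul]
            exact Finsupp.prod_congr (fun t ht => by rw [if_neg (not_lt.mpr (hm t ht))])
          rw [hz]
          exact Ideal.subset_span ⟨m, hmS, rfl⟩
      exact h2 h1
    have hφc : ψ c = 0 := by
      have h1 : ψ c ∈ Ideal.map ψ Q := Ideal.mem_map_of_mem _ hc
      have h2 : Ideal.map ψ Q ≤ ⊥ := by
        rw [hQ, Ideal.map_span]
        apply Ideal.span_le.mpr
        rintro g ⟨g', ⟨t, hti, rfl⟩, rfl⟩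
        simp [hψ, hφ, hti]
      simpa using h2 h1
    have hfix : ψ (monomial (Finsupp.single i j) (1 : k)) = monomial (Finsupp.single i j) 1 := by
      rw [← X_pow_eq_monomial, map_pow]
      simp [hψ, hφ]
    have : monomial (Finsupp.single i j) (1 : k) = ψ b := by
      rw [← hfix, ← hbc, map_add, hφc, add_zero]
    rw [this]; exact hφJ
end

section
/- Let J be a strongly stable monomial ideal of k[x_1,...,x_d] and fix 1 ≤ i ≤ d. Let L be the ideal generated by the minimal monomial generators of J that are divisible by none of x_{i+1},...,x_d. Then ω_i(J) = ω_i(L), where ω_i denotes the maximum of the i-th partial degrees of the minimal monomial generators. -/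
open MvPolynomial

/-- `m` is (the exponent of) a minimal monomial generator of `J`: the monomial `x^m`
lies in `J` and no proper divisor of it lies in `J`. -/
def IsMinGen {k : Type} [Field k] {d : ℕ} (J : Ideal (MvPolynomial (Fin d) k))
    (m : Fin d →₀ ℕ) : Prop :=
  monomial m (1 : k) ∈ J ∧ ∀ m' : Fin d →₀ ℕ, m' ≤ m → m' ≠ m → monomial m' (1 : k) ∉ J

/-- the `i`-th partial degree of an exponent vector (sum of the exponents of the
variables `x_1,…,x_i`, i.e. of the indices `t` with `t ≤ i` in `Fin d`). -/
def pdeg {d : ℕ} (i : Fin d) (m : Fin d →₀ ℕ) : ℕ :=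
  ∑ t ∈ Finset.univ.filter (fun t : Fin d => t ≤ i), m t

/-- tail degree -/
def tdeg {d : ℕ} (i : Fin d) (m : Fin d →₀ ℕ) : ℕ :=
  ∑ t ∈ Finset.univ.filter (fun t : Fin d => i < t), m t


section AuxLemmas
variable {k : Type} [Field k] {d : ℕ}

lemma monomial_mem_span_iff {S : Set (Fin d →₀ ℕ)} {m : Fin d →₀ ℕ} :
    monomial m (1 : k) ∈ Ideal.span ((fun s => monomial s (1 : k)) '' S) ↔ ∃ s ∈ S, s ≤ m := by
  rw [mem_ideal_span_monomial_image]
  simp [support_monomial]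

lemma sum_lt_of_lt {m' m : Fin d →₀ ℕ} (hle : m' ≤ m) (hne : m' ≠ m) :
    (∑ t, m' t) < ∑ t, m t := by
  have h : ∀ t, m' t ≤ m t := Finsupp.le_def.mp hle
  obtain ⟨t, ht⟩ : ∃ t, m' t ≠ m t := by
    by_contra h'; push_neg at h'; exact hne (Finsupp.ext h')
  exact Finset.sum_lt_sum (fun t _ => h t) ⟨t, Finset.mem_univ t, lt_of_le_of_ne (h t) ht⟩

lemma exists_minGen_le (J : Ideal (MvPolynomial (Fin d) k)) :
    ∀ N (m : Fin d →₀ ℕ), (∑ t, m t) ≤ N → monomial m (1 : k) ∈ J →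
      ∃ p, p ≤ m ∧ IsMinGen J p := by
  intro N
  induction N with
  | zero =>
    intro m hm hmem
    refine ⟨m, le_rfl, hmem, fun m' hle hne _ => ?_⟩
    exact absurd (lt_of_lt_of_le (sum_lt_of_lt hle hne) hm) (Nat.not_lt_zero _)
  | succ N ih =>
    intro m hm hmem
    by_cases hmin : IsMinGen J m
    · exact ⟨m, le_rfl, hmin⟩
    · have : ∃ m', m' ≤ m ∧ m' ≠ m ∧ monomial m' (1 : k) ∈ J := by
        by_contra h'
        push_neg at h'
        exact hmin ⟨hmem, fun m' h1 h2 => h' m' h1 h2⟩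
      obtain ⟨m', h1, h2, h3⟩ := this
      have hlt := sum_lt_of_lt h1 h2
      obtain ⟨p, hp1, hp2⟩ := ih m' (by omega) h3
      exact ⟨p, hp1.trans h1, hp2⟩

lemma step {J : Ideal (MvPolynomial (Fin d) k)} (hss : StronglyStable J) (i : Fin d)
    {m : Fin d →₀ ℕ} (hm : IsMinGen J m) {t : Fin d} (hit : i < t) (hmt : m t ≠ 0) :
    ∃ p, IsMinGen J p ∧ pdeg i p = pdeg i m + 1 ∧ tdeg i p < tdeg i m := by
  have hti : (t : Fin d) ≠ i := ne_of_gt hit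
  have hle1 : Finsupp.single t 1 ≤ m := by
    rw [Finsupp.single_le_iff]; omega
  have hcan : m - Finsupp.single t 1 + Finsupp.single t 1 = m := tsub_add_cancel_of_le hle1
  set n := m - Finsupp.single t 1 + Finsupp.single i 1 with hn
  have hnJ : monomial n (1 : k) ∈ J := hss _ i t hit (by rw [hcan]; exact hm.1)
  have hcoord : ∀ s, n s = m s - (if t = s then 1 else 0) + (if i = s then 1 else 0) := by
    intro s; simp [hn, Finsupp.tsub_apply, Finsupp.single_apply]
  have hni : n i = m i + 1 := by have := hcoord i; simpa [hti] using this
  have hnt : n t = m t - 1 := by have := hcoord t; simpa [hti.symm, (ne_of_gt hit).symm] using this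
  have hnle : ∀ s, s ≠ t → n s ≤ m s + (if i = s then 1 else 0) := by
    intro s hs; rw [hcoord s]; simp [Ne.symm hs]
  have hns : ∀ s, s ≠ t → s ≠ i → n s = m s := by
    intro s hs1 hs2; rw [hcoord s]; simp [Ne.symm hs1, Ne.symm hs2]
  have hiF : i ∈ Finset.univ.filter (fun s : Fin d => s ≤ i) := by simp
  have hpdeg_n : pdeg i n = pdeg i m + 1 := by
    unfold pdeg
    have hc : ∀ s ∈ Finset.univ.filter (fun s : Fin d => s ≤ i),
        n s = m s + (if i = s then 1 else 0) := by
      intro s hs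
      have hts : t ≠ s := by
        rintro rfl; exact absurd (Finset.mem_filter.mp hs).2 (not_le_of_gt hit)
      rw [hcoord s]; simp [hts]
    rw [Finset.sum_congr rfl hc, Finset.sum_add_distrib, Finset.sum_ite_eq]
    simp [hiF]
  have htdeg_n : tdeg i n < tdeg i m := by
    unfold tdeg
    refine Finset.sum_lt_sum ?_ ⟨t, by simp [hit], by omega⟩
    intro s hs
    have his : i ≠ s := ne_of_lt (Finset.mem_filter.mp hs).2
    have := hnle s
    rcases eq_or_ne s t with rfl | hst
    · omega
    · have := hnle s hst; simp [his] at this; omega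
  obtain ⟨p, hpn, hpmin⟩ := exists_minGen_le J _ n le_rfl hnJ
  have hpnle : ∀ s, p s ≤ n s := Finsupp.le_def.mp hpn
  refine ⟨p, hpmin, ?_, ?_⟩
  · -- pdeg i p = pdeg i m + 1
    have hub : pdeg i p ≤ pdeg i n := Finset.sum_le_sum fun s _ => hpnle s
    rcases eq_or_lt_of_le hub with heq | hlt
    · rw [heq, hpdeg_n]
    · exfalso
      have hple : pdeg i p ≤ pdeg i m := by omega
      rcases Nat.lt_or_ge (p i) (m i + 1) with hpi | hpi
      · -- case a : p ≤ m
        have hplem : p ≤ m := by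
          rw [Finsupp.le_def]; intro s
          rcases eq_or_ne s t with rfl | hst
          · have := hpnle s; omega
          · rcases eq_or_ne s i with rfl | hsi
            · omega
            · have := hpnle s; rw [hns s hst hsi] at this; exact this
        have hpne : p ≠ m := by
          intro h
          have := hpnle t
          rw [h, hnt] at this; omega
        exact hm.2 p hplem hpne hpmin.1
      · -- case b : p i = m i + 1, find deficit s < i
        have hpi' : p i = m i + 1 := by have := hpnle i; omega
        have hkey : ∑ s ∈ (Finset.univ.filter (fun s : Fin d => s ≤ i)).erase i, p s <
            ∑ s ∈ (Finset.univ.filter (fun s : Fin d => s ≤ i)).erase i, m s := by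
          have e1 := Finset.sum_erase_add (Finset.univ.filter (fun s : Fin d => s ≤ i)) p hiF
          have e2 := Finset.sum_erase_add (Finset.univ.filter (fun s : Fin d => s ≤ i)) m hiF
          unfold pdeg at hple
          omega
        obtain ⟨s, hsmem, hslt⟩ := Finset.exists_lt_of_sum_lt hkey
        have hsi : s ≠ i := Finset.ne_of_mem_erase hsmem
        have hsle : s ≤ i := (Finset.mem_filter.mp (Finset.mem_of_mem_erase hsmem)).2
        have hsilt : s < i := lt_of_le_of_ne hsle hsi
        have hst : s ≠ t := ne_of_lt (lt_trans hsilt hit)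
        have hpile : Finsupp.single i 1 ≤ p := by rw [Finsupp.single_le_iff]; omega
        have hqJ : monomial (p - Finsupp.single i 1 + Finsupp.single s 1) (1 : k) ∈ J :=
          hss _ s i hsilt (by rw [tsub_add_cancel_of_le hpile]; exact hpmin.1)
        set q := p - Finsupp.single i 1 + Finsupp.single s 1 with hq
        have hqcoord : ∀ u, q u = p u - (if i = u then 1 else 0) + (if s = u then 1 else 0) := by
          intro u; simp [hq, Finsupp.tsub_apply, Finsupp.single_apply]
        have hqlem : q ≤ m := by
          rw [Finsupp.le_def]; intro u
          have h2 := hqcoord u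
          by_cases hui : i = u
          · subst hui
            rw [if_pos rfl, if_neg hsi] at h2
            omega
          · by_cases hus : s = u
            · subst hus
              rw [if_neg hui, if_pos rfl] at h2
              omega
            · rw [if_neg hui, if_neg hus] at h2
              have h1 := hpnle u
              by_cases hut : t = u
              · subst hut; omega
              · rw [hns u (fun h => hut h.symm) (fun h => hui h.symm)] at h1
                omega
        have hqne : q ≠ m := by
          intro h
          have hqt : q t = m t := by rw [h]
          rw [hqcoord t, if_neg (Ne.symm hti), if_neg hst] at hqt
          have h1 := hpnle t
          omega
        exact hm.2 q hqlem hqne hqJ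
  · -- tdeg
    have : tdeg i p ≤ tdeg i n := Finset.sum_le_sum fun s _ => hpnle s
    omega


lemma to_front {J : Ideal (MvPolynomial (Fin d) k)} (hss : StronglyStable J) (i : Fin d) :
    ∀ N (m : Fin d →₀ ℕ), tdeg i m ≤ N → IsMinGen J m →
      ∃ q, IsMinGen J q ∧ (∀ t, i < t → q t = 0) ∧ pdeg i m ≤ pdeg i q := by
  intro N
  induction N with
  | zero =>
    intro m h hm
    refine ⟨m, hm, fun t ht => ?_, le_rfl⟩
    have := Finset.sum_eq_zero_iff.mp (Nat.le_zero.mp h) t (by simp [ht])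
    exact this
  | succ N ih =>
    intro m h hm
    by_cases h0 : tdeg i m = 0
    · refine ⟨m, hm, fun t ht => ?_, le_rfl⟩
      exact Finset.sum_eq_zero_iff.mp h0 t (by simp [ht])
    · obtain ⟨t, htmem, htne⟩ := Finset.exists_ne_zero_of_sum_ne_zero h0
      have hit : i < t := (Finset.mem_filter.mp htmem).2
      obtain ⟨p, hp, hpd, hpt⟩ := step hss i hm hit htne
      obtain ⟨q, hq, hq0, hqd⟩ := ih p (by omega) hp
      exact ⟨q, hq, hq0, by omega⟩

lemma minGen_L {J L : Ideal (MvPolynomial (Fin d) k)} (i : Fin d)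
    (hL : L = Ideal.span {g | ∃ m : Fin d →₀ ℕ,
      IsMinGen J m ∧ (∀ t : Fin d, i < t → m t = 0) ∧ g = monomial m (1 : k)}) (m : Fin d →₀ ℕ) :
    IsMinGen L m ↔ (IsMinGen J m ∧ ∀ t : Fin d, i < t → m t = 0) := by
  have hset : {g | ∃ m : Fin d →₀ ℕ,
      IsMinGen J m ∧ (∀ t : Fin d, i < t → m t = 0) ∧ g = monomial m (1 : k)} =
      (fun s => monomial s (1 : k)) '' {m | IsMinGen J m ∧ ∀ t : Fin d, i < t → m t = 0} := by
    ext g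
    simp only [Set.mem_setOf_eq, Set.mem_image]
    constructor
    · rintro ⟨m, h1, h2, rfl⟩; exact ⟨m, ⟨h1, h2⟩, rfl⟩
    · rintro ⟨m, ⟨h1, h2⟩, rfl⟩; exact ⟨m, h1, h2, rfl⟩
  rw [hset] at hL
  have hLJ : L ≤ J := by
    rw [hL]
    apply Ideal.span_le.mpr
    rintro g ⟨m', hm', rfl⟩
    exact hm'.1.1
  constructor
  · intro hm
    have h1 : monomial m (1 : k) ∈ L := hm.1
    rw [hL, monomial_mem_span_iff] at h1
    obtain ⟨s, hs, hsle⟩ := h1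
    have hsL : monomial s (1 : k) ∈ L := by
      rw [hL]; exact Ideal.subset_span ⟨s, hs, rfl⟩
    rcases eq_or_ne s m with rfl | hne
    · exact hs
    · exact absurd hsL (hm.2 s hsle hne)
  · intro hm
    constructor
    · rw [hL]; exact Ideal.subset_span ⟨m, hm, rfl⟩
    · intro m' hle hne hmem
      exact hm.1.2 m' hle hne (hLJ hmem)

lemma sSup_eq_of_between {A B : Set ℕ} (hBA : B ⊆ A) (h : ∀ a ∈ A, ∃ b ∈ B, a ≤ b) :
    sSup A = sSup B := by
  rcases A.eq_empty_or_nonempty with hA | hA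
  · have hB : B = ∅ := Set.subset_empty_iff.mp (hA ▸ hBA)
    rw [hA, hB]
  by_cases hbdd : BddAbove A
  · have hBbdd : BddAbove B := hbdd.mono hBA
    obtain ⟨a, ha⟩ := hA
    obtain ⟨b, hb, _⟩ := h a ha
    apply le_antisymm
    · refine csSup_le ⟨a, ha⟩ fun x hx => ?_
      obtain ⟨y, hy, hxy⟩ := h x hx
      exact hxy.trans (le_csSup hBbdd hy)
    · exact csSup_le_csSup hbdd ⟨b, hb⟩ hBA
  · have hBnb : ¬BddAbove B := by
      rintro ⟨M, hM⟩
      exact hbdd ⟨M, fun x hx => by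
        obtain ⟨b, hb, hxb⟩ := h x hx
        exact hxb.trans (hM hb)⟩
    rw [csSup_of_not_bddAbove hbdd, csSup_of_not_bddAbove hBnb]


end AuxLemmas

/-- for a strongly stable ideal `J`, the maximum `i`-th partial degree of a
minimal generator of `J` equals that for the ideal `L` generated by the minimal generators
of `J` divisible by none of `x_{i+1},…,x_d`. -/
theorem stmt2 {k : Type} [Field k] {d : ℕ} (J : Ideal (MvPolynomial (Fin d) k))
    (hmon : IsMonomialIdeal J) (hss : StronglyStable J) (i : Fin d)
    (L : Ideal (MvPolynomial (Fin d) k))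
    (hL : L = Ideal.span {g | ∃ m : Fin d →₀ ℕ,
      IsMinGen J m ∧ (∀ t : Fin d, i < t → m t = 0) ∧ g = monomial m (1 : k)}) :
    sSup {c : ℕ | ∃ m, IsMinGen J m ∧ pdeg i m = c} =
      sSup {c : ℕ | ∃ m, IsMinGen L m ∧ pdeg i m = c} := by
  apply sSup_eq_of_between
  · rintro b ⟨m, hm, rfl⟩
    exact ⟨m, ((minGen_L i hL m).mp hm).1, rfl⟩
  · rintro a ⟨m, hm, rfl⟩
    obtain ⟨q, hq, hq0, hqd⟩ := to_front hss i (tdeg i m) m le_rfl hm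
    exact ⟨pdeg i q, ⟨q, (minGen_L i hL q).mpr ⟨hq, hq0⟩, rfl⟩, hqd⟩
end

section
/- For a strongly stable monomial ideal J of k[x_1,...,x_d] and 1 ≤ i ≤ d with a_i(J) < ∞, the axial constant a_i(J) = min{m : x_i^m ∈ J} equals the least degree j such that J + (x_{i+1},...,x_d) contains all monomials of degree j. -/
open MvPolynomial

/-- height of an ideal: the infimum of the heights of the primes containing it. -/
noncomputable def idealHeight {R : Type} [CommRing R] (J : Ideal R) : ℕ∞ :=
  ⨅ p ∈ {p : PrimeSpectrum R | J ≤ p.asIdeal}, Order.height p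

variable {k : Type} [Field k] {d : ℕ}

private lemma degree_sum_eq (μ : Fin d →₀ ℕ) : μ.degree = μ.sum fun _ e => e := rfl

private lemma X_eq_monomial (t : Fin d) :
    (X t : MvPolynomial (Fin d) k) = monomial (Finsupp.single t 1) 1 := rfl

private lemma deg_single (s : Fin d) (e : ℕ) : (Finsupp.single s e).degree = e := by
  rw [degree_sum_eq]; exact Finsupp.sum_single_index rfl

private lemma weight_le (i : Fin d) (μ : Fin d →₀ ℕ) (hsupp : ∀ t, i < t → μ t = 0) :
    (μ.sum fun t e => t.val * e) ≤ μ.degree * i.val := by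
  rw [degree_sum_eq, Finsupp.sum, Finsupp.sum, Finset.sum_mul]
  refine Finset.sum_le_sum fun t ht => ?_
  have h1 : ¬ i < t := fun h => (Finsupp.mem_support_iff.mp ht) (hsupp t h)
  have h2 : t ≤ i := not_lt.mp h1
  calc t.val * μ t ≤ i.val * μ t := Nat.mul_le_mul_right _ h2
    _ = μ t * i.val := Nat.mul_comm _ _

private lemma ss_spread {J : Ideal (MvPolynomial (Fin d) k)} (hss : StronglyStable J)
    (i : Fin d) (a : ℕ) (hx : monomial (Finsupp.single i a) (1 : k) ∈ J) :
    ∀ μ : Fin d →₀ ℕ, μ.degree = a → (∀ t, i < t → μ t = 0) → monomial μ (1 : k) ∈ J := by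
  have key : ∀ N : ℕ, ∀ μ : Fin d →₀ ℕ, μ.degree = a → (∀ t, i < t → μ t = 0) →
      a * i.val - μ.sum (fun t e => t.val * e) = N → monomial μ (1 : k) ∈ J := by
    intro N
    induction N using Nat.strong_induction_on with
    | _ N ih =>
      intro μ hdeg hsupp hN
      by_cases hall : ∀ t : Fin d, μ t ≠ 0 → t = i
      · have hsub : μ.support ⊆ {i} := fun t ht => by
          simp [hall t (Finsupp.mem_support_iff.mp ht)]
        have hμi : μ i = a := by
          rw [← hdeg, Finsupp.degree_apply]
          rw [Finset.sum_subset hsub (fun x _ hx => Finsupp.notMem_support_iff.mp hx)]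
          simp
        have : μ = Finsupp.single i a := Finsupp.eq_single_iff.mpr ⟨hsub, hμi⟩
        rw [this]; exact hx
      · push_neg at hall
        obtain ⟨t, ht, hti⟩ := hall
        have htlt : t < i := by
          rcases lt_or_ge t i with h | h
          · exact h
          · rcases eq_or_lt_of_le h with h' | h'
            · exact absurd h'.symm hti
            · exact absurd (hsupp t h') ht
        have hle : Finsupp.single t 1 ≤ μ :=
          Finsupp.single_le_iff.mpr (Nat.one_le_iff_ne_zero.mpr ht)
        set m := μ - Finsupp.single t 1 with hm
        have hμeq : m + Finsupp.single t 1 = μ := tsub_add_cancel_of_le hle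
        set ν := m + Finsupp.single i 1 with hν
        -- degree computations
        have hsum_add : ∀ (f g : Fin d →₀ ℕ), (f + g).degree = f.degree + g.degree := by
          intro f g
          rw [degree_sum_eq, degree_sum_eq, degree_sum_eq]
          exact Finsupp.sum_add_index' (fun _ => rfl) (fun _ _ _ => rfl)

        have hmdeg : m.degree + 1 = a := by
          have := hsum_add m (Finsupp.single t 1)
          rw [hμeq, hdeg, deg_single] at this
          omega
        have hνdeg : ν.degree = a := by
          rw [hν, hsum_add, deg_single]; omega
        have hνsupp : ∀ s, i < s → ν s = 0 := by
          intro s hs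
          have hsi : s ≠ i := fun h => by subst h; exact lt_irrefl _ hs
          have hst : s ≠ t := fun h => by subst h; exact absurd (htlt.trans hs) (lt_irrefl _)
          have : μ s = 0 := hsupp s hs
          simp [hν, hm, Finsupp.tsub_apply, Finsupp.single_apply, Ne.symm hsi, Ne.symm hst, this]
        -- weight computations
        have hw_add : ∀ (f g : Fin d →₀ ℕ),
            ((f + g).sum fun s e => s.val * e) = (f.sum fun s e => s.val * e) +
              (g.sum fun s e => s.val * e) :=
          fun f g => Finsupp.sum_add_index' (fun _ => rfl) (fun s _ _ => Nat.mul_add _ _ _)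
        have hw_single : ∀ (s : Fin d) (e : ℕ),
            ((Finsupp.single s e).sum fun s e => s.val * e) = s.val * e :=
          fun s e => Finsupp.sum_single_index (Nat.mul_zero _)
        have hwμ : (μ.sum fun s e => s.val * e) =
            (m.sum fun s e => s.val * e) + t.val := by
          conv_lhs => rw [← hμeq]
          rw [hw_add, hw_single, Nat.mul_one]
        have hwν : (ν.sum fun s e => s.val * e) =
            (m.sum fun s e => s.val * e) + i.val := by
          rw [hν, hw_add, hw_single, Nat.mul_one]
        have hwνle : (ν.sum fun s e => s.val * e) ≤ a * i.val := by
          have := weight_le i ν hνsupp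
          rwa [hνdeg] at this
        have hlt : a * i.val - (ν.sum fun s e => s.val * e) < N := by
          have htlti : t.val < i.val := htlt
          omega
        have hνJ : monomial ν (1 : k) ∈ J := ih _ hlt ν hνdeg hνsupp rfl
        have := hss m t i htlt (by rwa [← hν])
        rwa [hμeq] at this
  exact fun μ hdeg hsupp => key _ μ hdeg hsupp rfl

theorem stmt8 {k : Type} [Field k] {d : ℕ} (J : Ideal (MvPolynomial (Fin d) k))
    (hmon : IsMonomialIdeal J) (hss : StronglyStable J) (i : Fin d)
    (hfin : ∃ m : ℕ, monomial (Finsupp.single i m) (1 : k) ∈ J) :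
    sInf {m : ℕ | monomial (Finsupp.single i m) (1 : k) ∈ J} =
      sInf {j : ℕ | ∀ f ∈ homogeneousSubmodule (Fin d) k j,
        f ∈ J ⊔ Ideal.span {g | ∃ t : Fin d, i < t ∧ g = X t}} := by
  obtain ⟨S, hS⟩ := hmon
  set L : Ideal (MvPolynomial (Fin d) k) :=
    Ideal.span {g | ∃ t : Fin d, i < t ∧ g = X t} with hL
  set A := {m : ℕ | monomial (Finsupp.single i m) (1 : k) ∈ J} with hA
  set B := {j : ℕ | ∀ f ∈ homogeneousSubmodule (Fin d) k j, f ∈ J ⊔ L} with hB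
  -- sup is a monomial ideal generated by S'
  set S' : Set (Fin d →₀ ℕ) := S ∪ (fun t => Finsupp.single t 1) '' {t | i < t} with hS'
  have hsup : J ⊔ L = Ideal.span ((fun m => monomial m (1 : k)) '' S') := by
    rw [hS', Set.image_union, Ideal.span_union, hS, hL]
    congr 1
    congr 1
    rw [Set.image_image]
    ext g
    simp only [Set.mem_setOf_eq, Set.mem_image]
    constructor
    · rintro ⟨t, hti, rfl⟩
      exact ⟨t, hti, (X_eq_monomial t).symm⟩
    · rintro ⟨t, hti, rfl⟩
      exact ⟨t, hti, X_eq_monomial t⟩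
  -- purity: x_i^b in sup implies in J
  have hpure : ∀ b : ℕ, monomial (Finsupp.single i b) (1 : k) ∈ J ⊔ L →
      monomial (Finsupp.single i b) (1 : k) ∈ J := by
    intro b hb
    rw [hsup, mem_ideal_span_monomial_image] at hb
    classical
    have hmem : Finsupp.single i b ∈ (monomial (Finsupp.single i b) (1 : k)).support := by
      simp [MvPolynomial.support_monomial]
    obtain ⟨s, hsS', hsle⟩ := hb _ hmem
    have hsS : s ∈ S := by
      rcases hsS' with h | ⟨t, hti, rfl⟩
      · exact h
      · exfalso
        have := hsle t
        have hit : i ≠ t := ne_of_lt hti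
        simp [Finsupp.single_apply, hit] at this
    rw [hS, mem_ideal_span_monomial_image]
    intro xi hxi
    simp [MvPolynomial.support_monomial] at hxi
    exact ⟨s, hsS, hxi ▸ hsle⟩
  -- every monomial of degree a = sInf A lies in sup
  have hAne : A.Nonempty := hfin
  set a := sInf A with ha
  have haA : a ∈ A := Nat.sInf_mem hAne
  have haB : a ∈ B := by
    intro f hf
    rw [mem_homogeneousSubmodule] at hf
    have : f = ∑ m ∈ f.support, monomial m (coeff m f) := (support_sum_monomial_coeff f).symm
    rw [this]
    refine Submodule.sum_mem _ fun m hm => ?_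
    have hmdeg : m.degree = a := by
      have := hf (MvPolynomial.mem_support_iff.mp hm)
      rw [Finsupp.degree_eq_weight_one]; exact this
    by_cases hc : ∃ t, i < t ∧ m t ≠ 0
    · obtain ⟨t, hti, hmt⟩ := hc
      refine Ideal.mem_sup_right ?_
      have hXt : (X t : MvPolynomial (Fin d) k) ∈ L :=
        Ideal.subset_span ⟨t, hti, rfl⟩
      have hle : Finsupp.single t 1 ≤ m :=
        Finsupp.single_le_iff.mpr (Nat.one_le_iff_ne_zero.mpr hmt)
      have heq : monomial m (coeff m f) =
          X t * monomial (m - Finsupp.single t 1) (coeff m f) := by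
        rw [X_eq_monomial, MvPolynomial.monomial_mul, one_mul]
        congr 1
        rw [add_comm, tsub_add_cancel_of_le hle]
      rw [heq]
      exact Ideal.mul_mem_right _ _ hXt
    · push_neg at hc
      refine Ideal.mem_sup_left ?_
      have : monomial m (1 : k) ∈ J := ss_spread hss i a haA m hmdeg hc
      have hsm : monomial m (coeff m f) = C (coeff m f) * monomial m (1 : k) := by
        rw [C_mul_monomial, mul_one]
      rw [hsm]
      exact Ideal.mul_mem_left _ _ this
  have hBne : B.Nonempty := ⟨a, haB⟩
  apply le_antisymm
  · -- sInf A ≤ sInf B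
    have hb := Nat.sInf_mem hBne
    set b := sInf B with hbdef
    have hxb : monomial (Finsupp.single i b) (1 : k) ∈ J ⊔ L := by
      refine hb _ ?_
      rw [mem_homogeneousSubmodule]
      exact isHomogeneous_monomial _ (deg_single i b)
    exact Nat.sInf_le (hpure b hxb)
  · exact Nat.sInf_le haB
end
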